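/- Under the assumptions of the bias–variance decomposition theorem, the projected regressor w*_proj constructed with S* = {e_{z,j} : Var_{z,j} ≥ Bias_{z,j}} satisfies E[‖Y_Z − Z w_proj‖²] ≥ E[‖Y_Z − Z w*_proj‖²] for every projected regressor w_proj constructed from any subset S of the right singular vectors of Z. -/

import Mathlib

open Matrix MeasureTheory ProbabilityTheory
open scoped NNReal

noncomputable section

/-- The (rectangular) diagonal matrix of singular values in a full SVD. -/
def svdS (N D : ℕ) (lam : Fin D → ℝ) : Matrix (Fin N) (Fin D) ℝ :=
  Matrix.of fun i j => if (i : ℕ) = (j : ℕ) then lam j else 0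

/-- The pseudoinverse of the rectangular diagonal matrix of singular values. -/
def svdSdag (N D : ℕ) (lam : Fin D → ℝ) : Matrix (Fin D) (Fin N) ℝ :=
  Matrix.of fun j i => if (i : ℕ) = (j : ℕ) ∧ lam j ≠ 0 then (lam j)⁻¹ else 0

section AuxLemmas
open Real Filter Asymptotics
open scoped ENNReal
set_option linter.unusedSectionVars false


lemma tendsto_mulexp_atTop {b : ℝ} (hb : 0 < b) :
    Tendsto (fun x : ℝ => x * Real.exp (-b * x ^ 2)) atTop (nhds 0) := by
  have h := rpow_mul_exp_neg_mul_sq_isLittleO_exp_neg hb 1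
  have h2 : (fun x : ℝ => x * Real.exp (-b * x ^ 2)) =o[atTop]
      fun x : ℝ => Real.exp (-(1/2) * x) := by
    refine h.congr' ?_ (by rfl)
    filter_upwards [] with x
    rw [Real.rpow_one]
  refine h2.isBigO.trans_tendsto ?_
  exact Real.tendsto_exp_atBot.comp ((tendsto_const_mul_atBot_of_neg (by norm_num)).2 tendsto_id)

lemma tendsto_mulexp_atBot {b : ℝ} (hb : 0 < b) :
    Tendsto (fun x : ℝ => x * Real.exp (-b * x ^ 2)) atBot (nhds 0) := by
  have h : Tendsto (fun x : ℝ => -((-x) * Real.exp (-b * (-x) ^ 2))) atBot (nhds 0) := by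
    have := ((tendsto_mulexp_atTop hb).comp tendsto_neg_atBot_atTop).neg
    simpa using this
  refine h.congr (fun x => by ring_nf)

lemma integrable_sq_mul_exp {b : ℝ} (hb : 0 < b) :
    Integrable (fun x : ℝ => x ^ 2 * Real.exp (-b * x ^ 2)) := by
  have := integrable_rpow_mul_exp_neg_mul_sq hb (s := 2) (by norm_num)
  refine this.congr ?_
  filter_upwards [] with x
  norm_num [Real.rpow_natCast x 2]

lemma integral_sq_mul_exp {b : ℝ} (hb : 0 < b) :
    ∫ x : ℝ, x ^ 2 * Real.exp (-b * x ^ 2) = (2*b)⁻¹ * Real.sqrt (π / b) := by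
  have hderiv : ∀ x : ℝ, HasDerivAt (fun x : ℝ => -(2*b)⁻¹ * (x * Real.exp (-b * x ^ 2)))
      (x ^ 2 * Real.exp (-b * x ^ 2) - (2*b)⁻¹ * Real.exp (-b * x ^ 2)) x := by
    intro x
    have h1 : HasDerivAt (fun x : ℝ => -b * x ^ 2) (-b * (2 * x)) x := by
      simpa using ((hasDerivAt_pow 2 x).const_mul (-b))
    have h2 : HasDerivAt (fun x : ℝ => x * Real.exp (-b * x ^ 2))
        (1 * Real.exp (-b * x ^ 2) + x * (Real.exp (-b * x ^ 2) * (-b * (2 * x)))) x :=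
      (hasDerivAt_id x).mul h1.exp
    have h3 := h2.const_mul (-(2*b)⁻¹)
    refine h3.congr_deriv ?_
    field_simp [hb.ne']
    ring
  have hint : Integrable (fun x : ℝ =>
      x ^ 2 * Real.exp (-b * x ^ 2) - (2*b)⁻¹ * Real.exp (-b * x ^ 2)) :=
    (integrable_sq_mul_exp hb).sub ((integrable_exp_neg_mul_sq hb).const_mul _)
  have h0 := MeasureTheory.integral_of_hasDerivAt_of_tendsto hderiv hint
    (((tendsto_mulexp_atBot hb).const_mul (-(2*b)⁻¹)))
    (((tendsto_mulexp_atTop hb).const_mul (-(2*b)⁻¹)))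
  simp only [mul_zero, sub_zero] at h0
  have h1 := MeasureTheory.integral_sub (integrable_sq_mul_exp hb)
    ((integrable_exp_neg_mul_sq hb).const_mul ((2*b)⁻¹))
  rw [h1] at h0
  have h2 : ∫ x : ℝ, (2*b)⁻¹ * Real.exp (-b * x ^ 2) = (2*b)⁻¹ * Real.sqrt (π / b) := by
    rw [MeasureTheory.integral_const_mul, integral_gaussian]
  linarith [h0, h2]

lemma tendsto_exp_sq_atTop {b : ℝ} (hb : 0 < b) :
    Tendsto (fun x : ℝ => Real.exp (-b * x ^ 2)) atTop (nhds 0) := by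
  apply Real.tendsto_exp_atBot.comp
  have : Tendsto (fun x : ℝ => x ^ 2) atTop atTop := tendsto_pow_atTop two_ne_zero
  exact (tendsto_const_mul_atBot_of_neg (by linarith)).2 this

lemma tendsto_exp_sq_atBot {b : ℝ} (hb : 0 < b) :
    Tendsto (fun x : ℝ => Real.exp (-b * x ^ 2)) atBot (nhds 0) := by
  have := (tendsto_exp_sq_atTop hb).comp tendsto_neg_atBot_atTop
  refine this.congr (fun x => by simp [neg_sq])


lemma integral_mul_exp_zero {b : ℝ} (hb : 0 < b) :
    ∫ x : ℝ, x * Real.exp (-b * x ^ 2) = 0 := by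
  have hderiv : ∀ x : ℝ, HasDerivAt (fun x : ℝ => -(2*b)⁻¹ * Real.exp (-b * x ^ 2))
      (x * Real.exp (-b * x ^ 2)) x := by
    intro x
    have h1 : HasDerivAt (fun x : ℝ => -b * x ^ 2) (-b * (2 * x)) x := by
      simpa using ((hasDerivAt_pow 2 x).const_mul (-b))
    have h2 := (h1.exp).const_mul (-(2*b)⁻¹)
    refine h2.congr_deriv ?_
    field_simp [hb.ne']
  have := MeasureTheory.integral_of_hasDerivAt_of_tendsto hderiv
    (integrable_mul_exp_neg_mul_sq hb)
    (((tendsto_exp_sq_atBot hb).const_mul _))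
    (((tendsto_exp_sq_atTop hb).const_mul _))
  simpa using this


-- helper: generic transfer for gaussianReal 0 v, v ≠ 0
lemma gauss_withDensity (v : ℝ≥0) (hv : v ≠ 0) :
    gaussianReal 0 v
      = (volume : Measure ℝ).withDensity (fun x => ((gaussianPDFReal 0 v x).toNNReal : ℝ≥0∞)) := by
  rw [gaussianReal_of_var_ne_zero _ hv]
  rfl

lemma gauss_integrable_iff (v : ℝ≥0) (hv : v ≠ 0) (g : ℝ → ℝ) :
    Integrable g (gaussianReal 0 v)
      ↔ Integrable (fun x => gaussianPDFReal 0 v x * g x) volume := by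
  rw [gauss_withDensity v hv,
    integrable_withDensity_iff_integrable_smul (measurable_gaussianPDFReal 0 v).real_toNNReal]
  constructor <;> intro h <;> refine h.congr (Filter.Eventually.of_forall fun x => ?_)
  · simp [NNReal.smul_def, Real.coe_toNNReal _ (gaussianPDFReal_nonneg 0 v x)]
  · simp [NNReal.smul_def, Real.coe_toNNReal _ (gaussianPDFReal_nonneg 0 v x)]

lemma gauss_integral_eq (v : ℝ≥0) (hv : v ≠ 0) (g : ℝ → ℝ) :
    ∫ x, g x ∂(gaussianReal 0 v) = ∫ x, gaussianPDFReal 0 v x * g x := by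
  rw [gauss_withDensity v hv,
    integral_withDensity_eq_integral_smul (measurable_gaussianPDFReal 0 v).real_toNNReal]
  refine integral_congr_ae (Filter.Eventually.of_forall fun x => ?_)
  simp [NNReal.smul_def, Real.coe_toNNReal _ (gaussianPDFReal_nonneg 0 v x)]

lemma gaussianPDFReal_zero_mean (v : ℝ≥0) (x : ℝ) :
    gaussianPDFReal 0 v x = (Real.sqrt (2 * π * v))⁻¹ * Real.exp (-((2 * (v:ℝ))⁻¹) * x ^ 2) := by
  rw [gaussianPDFReal]
  congr 1
  rw [sub_zero]
  by_cases h : (v:ℝ) = 0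
  · simp [h]
  · field_simp



lemma vb_pos {v : ℝ≥0} (hv : v ≠ 0) : 0 < (2 * (v:ℝ))⁻¹ := by
  have : 0 < (v:ℝ) := by positivity
  positivity

lemma gauss_integrable_id (v : ℝ≥0) : Integrable (fun x : ℝ => x) (gaussianReal 0 v) := by
  by_cases hv : v = 0
  · subst hv; simp only [gaussianReal_zero_var]
    exact (integrable_const _).congr (ae_eq_dirac _).symm
  · rw [gauss_integrable_iff v hv]
    have := (integrable_mul_exp_neg_mul_sq (vb_pos hv)).const_mul (Real.sqrt (2 * π * v))⁻¹
    refine this.congr (Filter.Eventually.of_forall fun x => ?_)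
    simp only [gaussianPDFReal_zero_mean]; ring

lemma gauss_integral_id (v : ℝ≥0) : ∫ x, x ∂(gaussianReal 0 v) = 0 := by
  by_cases hv : v = 0
  · subst hv; simp only [gaussianReal_zero_var]
    simp
  · rw [gauss_integral_eq v hv]
    have h1 : ∀ x : ℝ, gaussianPDFReal 0 v x * x
        = (Real.sqrt (2 * π * v))⁻¹ * (x * Real.exp (-((2 * (v:ℝ))⁻¹) * x ^ 2)) := by
      intro x; rw [gaussianPDFReal_zero_mean]; ring
    simp only [h1]
    rw [MeasureTheory.integral_const_mul, integral_mul_exp_zero (vb_pos hv), mul_zero]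

lemma gauss_integrable_sq (v : ℝ≥0) : Integrable (fun x : ℝ => x ^ 2) (gaussianReal 0 v) := by
  by_cases hv : v = 0
  · subst hv; simp only [gaussianReal_zero_var]
    exact (integrable_const _).congr (ae_eq_dirac _).symm
  · rw [gauss_integrable_iff v hv]
    have := (integrable_sq_mul_exp (vb_pos hv)).const_mul (Real.sqrt (2 * π * v))⁻¹
    refine this.congr (Filter.Eventually.of_forall fun x => ?_)
    simp only [gaussianPDFReal_zero_mean]; ring

lemma gauss_integral_sq (v : ℝ≥0) : ∫ x, x ^ 2 ∂(gaussianReal 0 v) = v := by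
  by_cases hv : v = 0
  · subst hv; simp only [gaussianReal_zero_var]
    simp
  · rw [gauss_integral_eq v hv]
    have h1 : ∀ x : ℝ, gaussianPDFReal 0 v x * x ^ 2
        = (Real.sqrt (2 * π * v))⁻¹ * (x ^ 2 * Real.exp (-((2 * (v:ℝ))⁻¹) * x ^ 2)) := by
      intro x; rw [gaussianPDFReal_zero_mean]; ring
    simp only [h1]
    rw [MeasureTheory.integral_const_mul, integral_sq_mul_exp (vb_pos hv)]
    have hvpos : 0 < (v:ℝ) := by positivity
    have h2 : (2 * ((2 * (v:ℝ))⁻¹))⁻¹ = (v:ℝ) := by field_simp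
    have h3 : π / ((2 * (v:ℝ))⁻¹) = 2 * π * v := by field_simp
    rw [h2, h3]
    have h4 : Real.sqrt (2 * π * v) > 0 := Real.sqrt_pos.mpr (by positivity)
    field_simp



variable {Ω : Type*} [MeasurableSpace Ω] {μ : Measure Ω} [IsProbabilityMeasure μ]
  {N : ℕ} {σ : ℝ≥0} {ε : Ω → Fin N → ℝ}

lemma eps_int1 (hmeas : ∀ i, Measurable fun ω => ε ω i)
    (hgauss : ∀ i, Measure.map (fun ω => ε ω i) μ = gaussianReal 0 (σ ^ 2)) (i : Fin N) :
    Integrable (fun ω => ε ω i) μ := by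
  have h : Integrable (fun x : ℝ => x) (Measure.map (fun ω => ε ω i) μ) := by
    rw [hgauss i]; exact gauss_integrable_id _
  exact (integrable_map_measure aestronglyMeasurable_id (hmeas i).aemeasurable).mp h

lemma eps_E1 (hmeas : ∀ i, Measurable fun ω => ε ω i)
    (hgauss : ∀ i, Measure.map (fun ω => ε ω i) μ = gaussianReal 0 (σ ^ 2)) (i : Fin N) :
    ∫ ω, ε ω i ∂μ = 0 := by
  have h : ∫ x, x ∂(Measure.map (fun ω => ε ω i) μ) = ∫ ω, ε ω i ∂μ :=
    integral_map (hmeas i).aemeasurable aestronglyMeasurable_id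
  rw [← h, hgauss i, gauss_integral_id]

lemma eps_int2 (hmeas : ∀ i, Measurable fun ω => ε ω i)
    (hgauss : ∀ i, Measure.map (fun ω => ε ω i) μ = gaussianReal 0 (σ ^ 2)) (i : Fin N) :
    Integrable (fun ω => ε ω i ^ 2) μ := by
  have h : Integrable (fun x : ℝ => x ^ 2) (Measure.map (fun ω => ε ω i) μ) := by
    rw [hgauss i]; exact gauss_integrable_sq _
  exact (integrable_map_measure (measurable_id.pow_const 2).aestronglyMeasurable
    (hmeas i).aemeasurable).mp h

lemma eps_E2 (hmeas : ∀ i, Measurable fun ω => ε ω i)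
    (hgauss : ∀ i, Measure.map (fun ω => ε ω i) μ = gaussianReal 0 (σ ^ 2)) (i : Fin N) :
    ∫ ω, ε ω i ^ 2 ∂μ = (σ : ℝ) ^ 2 := by
  have h : ∫ x, x ^ 2 ∂(Measure.map (fun ω => ε ω i) μ) = ∫ ω, ε ω i ^ 2 ∂μ :=
    integral_map (hmeas i).aemeasurable (measurable_id.pow_const 2).aestronglyMeasurable
  rw [← h, hgauss i, gauss_integral_sq]
  push_cast
  ring

lemma eps_prod_int (hmeas : ∀ i, Measurable fun ω => ε ω i)
    (hindep : iIndepFun (fun i ω => ε ω i) μ)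
    (hgauss : ∀ i, Measure.map (fun ω => ε ω i) μ = gaussianReal 0 (σ ^ 2)) (i k : Fin N) :
    Integrable (fun ω => ε ω i * ε ω k) μ := by
  by_cases hik : i = k
  · subst hik
    exact (eps_int2 hmeas hgauss i).congr (Filter.Eventually.of_forall fun ω => pow_two _)
  · exact (hindep.indepFun hik).integrable_mul (eps_int1 hmeas hgauss i) (eps_int1 hmeas hgauss k)

lemma eps_prod_E (hmeas : ∀ i, Measurable fun ω => ε ω i)
    (hindep : iIndepFun (fun i ω => ε ω i) μ)
    (hgauss : ∀ i, Measure.map (fun ω => ε ω i) μ = gaussianReal 0 (σ ^ 2)) (i k : Fin N) :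
    ∫ ω, ε ω i * ε ω k ∂μ = if i = k then (σ : ℝ) ^ 2 else 0 := by
  by_cases hik : i = k
  · subst hik
    rw [if_pos rfl, ← eps_E2 hmeas hgauss i]
    exact integral_congr_ae (Filter.Eventually.of_forall fun ω => (pow_two _).symm)
  · have h : ∫ ω, ε ω i * ε ω k ∂μ
        = ∫ ω, ((fun ω => ε ω i) * fun ω => ε ω k) ω ∂μ := rfl
    rw [if_neg hik, h, (hindep.indepFun hik).integral_mul_eq_mul_integral
      (eps_int1 hmeas hgauss i).aestronglyMeasurable (eps_int1 hmeas hgauss k).aestronglyMeasurable, eps_E1 hmeas hgauss i, zero_mul]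

lemma eps_dot_sq_int (hmeas : ∀ i, Measurable fun ω => ε ω i)
    (hindep : iIndepFun (fun i ω => ε ω i) μ)
    (hgauss : ∀ i, Measure.map (fun ω => ε ω i) μ = gaussianReal 0 (σ ^ 2)) (c : Fin N → ℝ) :
    Integrable (fun ω => (ε ω ⬝ᵥ c) ^ 2) μ := by
  have hexp : (fun ω => (ε ω ⬝ᵥ c) ^ 2)
      = fun ω => ∑ i, ∑ k, (c i * c k) * (ε ω i * ε ω k) := by
    funext ω
    simp only [dotProduct, sq, Finset.sum_mul_sum]
    exact Finset.sum_congr rfl fun i _ => Finset.sum_congr rfl fun k _ => by ring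
  rw [hexp]
  exact integrable_finset_sum _ fun i _ => integrable_finset_sum _ fun k _ =>
    (eps_prod_int hmeas hindep hgauss i k).const_mul _

lemma eps_dot_sq_E (hmeas : ∀ i, Measurable fun ω => ε ω i)
    (hindep : iIndepFun (fun i ω => ε ω i) μ)
    (hgauss : ∀ i, Measure.map (fun ω => ε ω i) μ = gaussianReal 0 (σ ^ 2)) (c : Fin N → ℝ) :
    ∫ ω, (ε ω ⬝ᵥ c) ^ 2 ∂μ = (σ : ℝ) ^ 2 * (c ⬝ᵥ c) := by
  have hexp : (fun ω => (ε ω ⬝ᵥ c) ^ 2)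
      = fun ω => ∑ i, ∑ k, (c i * c k) * (ε ω i * ε ω k) := by
    funext ω
    simp only [dotProduct, sq, Finset.sum_mul_sum]
    exact Finset.sum_congr rfl fun i _ => Finset.sum_congr rfl fun k _ => by ring
  rw [hexp, integral_finset_sum _ fun i _ => integrable_finset_sum _ fun k _ =>
    (eps_prod_int hmeas hindep hgauss i k).const_mul _]
  have : ∀ i : Fin N, ∫ ω, (∑ k, (c i * c k) * (ε ω i * ε ω k)) ∂μ
      = (σ : ℝ) ^ 2 * (c i * c i) := by
    intro i
    rw [integral_finset_sum _ fun k _ => (eps_prod_int hmeas hindep hgauss i k).const_mul _]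
    have : ∀ k : Fin N, ∫ ω, (c i * c k) * (ε ω i * ε ω k) ∂μ
        = if i = k then (σ : ℝ) ^ 2 * (c i * c i) else 0 := by
      intro k
      rw [integral_const_mul, eps_prod_E hmeas hindep hgauss i k]
      by_cases hik : i = k
      · subst hik; simp [mul_comm]
      · simp [hik]
    simp only [this, Finset.sum_ite_eq, Finset.mem_univ, if_pos]
  simp only [this, ← Finset.mul_sum, dotProduct]




lemma sum_ite_fin {N D : ℕ} (j : Fin D) (f : Fin N → ℝ) :
    (∑ i : Fin N, if (i : ℕ) = (j : ℕ) then f i else 0)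
      = if h : (j : ℕ) < N then f ⟨j, h⟩ else 0 := by
  by_cases h : (j : ℕ) < N
  · rw [dif_pos h, Finset.sum_eq_single (⟨(j : ℕ), h⟩ : Fin N)]
    · simp
    · intro i _ hi
      rw [if_neg]
      intro hc
      exact hi (Fin.ext (by simpa using hc))
    · simp
  · rw [dif_neg h]
    apply Finset.sum_eq_zero
    intro i _
    rw [if_neg]
    intro hc
    exact h (hc ▸ i.isLt)

lemma svdS_tmul {N D : ℕ} (lam : Fin D → ℝ) :
    (svdS N D lam)ᵀ * svdS N D lam
      = Matrix.diagonal (fun j : Fin D => (if (j : ℕ) < N then 1 else 0) * lam j ^ 2) := by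
  ext j j'
  simp only [Matrix.mul_apply, Matrix.transpose_apply, svdS, Matrix.of_apply,
    Matrix.diagonal_apply]
  by_cases hjj : j = j'
  · subst hjj
    have : ∀ i : Fin N, ((if (i : ℕ) = (j : ℕ) then lam j else 0)
        * (if (i : ℕ) = (j : ℕ) then lam j else 0))
        = if (i : ℕ) = (j : ℕ) then lam j * lam j else 0 := by
      intro i; split_ifs <;> simp
    rw [Finset.sum_congr rfl fun i _ => this i, sum_ite_fin]
    by_cases hN : (j : ℕ) < N <;> simp [hN, sq]
  · rw [if_neg hjj]
    apply Finset.sum_eq_zero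
    intro i _
    split_ifs with h1 h2
    · exact absurd (Fin.ext ((h1.symm.trans h2 : (j:ℕ) = (j':ℕ)))) hjj
    all_goals ring

lemma sdag_mul_s {N D : ℕ} (lam : Fin D → ℝ) :
    svdSdag N D lam * svdS N D lam
      = Matrix.diagonal (fun j : Fin D => if (j : ℕ) < N ∧ lam j ≠ 0 then (1:ℝ) else 0) := by
  ext j j'
  simp only [Matrix.mul_apply, svdS, svdSdag, Matrix.of_apply, Matrix.diagonal_apply]
  by_cases hjj : j = j'
  · subst hjj
    have : ∀ i : Fin N, ((if (i : ℕ) = (j : ℕ) ∧ lam j ≠ 0 then (lam j)⁻¹ else 0)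
        * (if (i : ℕ) = (j : ℕ) then lam j else 0))
        = if (i : ℕ) = (j : ℕ) then (if lam j ≠ 0 then (1:ℝ) else 0) else 0 := by
      intro i
      by_cases h1 : (i : ℕ) = (j : ℕ) <;> by_cases h2 : lam j = 0 <;>
        simp [h1, h2, inv_mul_cancel₀]
    rw [Finset.sum_congr rfl fun i _ => this i, sum_ite_fin]
    by_cases hN : (j : ℕ) < N <;> by_cases h2 : lam j = 0 <;> simp [hN, h2]
  · rw [if_neg hjj]
    apply Finset.sum_eq_zero
    intro i _
    split_ifs with h1 h2
    · exact absurd (Fin.ext ((h1.1.symm.trans h2 : (j:ℕ) = (j':ℕ)))) hjj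
    all_goals ring

lemma sdag_mul_sdagT {N D : ℕ} (lam : Fin D → ℝ) :
    svdSdag N D lam * (svdSdag N D lam)ᵀ
      = Matrix.diagonal
          (fun j : Fin D => if (j : ℕ) < N ∧ lam j ≠ 0 then (lam j ^ 2)⁻¹ else 0) := by
  ext j j'
  simp only [Matrix.mul_apply, svdSdag, Matrix.transpose_apply, Matrix.of_apply,
    Matrix.diagonal_apply]
  by_cases hjj : j = j'
  · subst hjj
    have : ∀ i : Fin N, ((if (i : ℕ) = (j : ℕ) ∧ lam j ≠ 0 then (lam j)⁻¹ else 0)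
        * (if (i : ℕ) = (j : ℕ) ∧ lam j ≠ 0 then (lam j)⁻¹ else 0))
        = if (i : ℕ) = (j : ℕ) then (if lam j ≠ 0 then (lam j ^ 2)⁻¹ else 0) else 0 := by
      intro i
      by_cases h1 : (i : ℕ) = (j : ℕ) <;> by_cases h2 : lam j = 0 <;>
        simp [h1, h2, sq, mul_inv]
    rw [Finset.sum_congr rfl fun i _ => this i, sum_ite_fin]
    by_cases hN : (j : ℕ) < N <;> by_cases h2 : lam j = 0 <;> simp [hN, h2]
  · rw [if_neg hjj]
    apply Finset.sum_eq_zero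
    intro i _
    split_ifs with h1 h2
    · exact absurd (Fin.ext ((h1.1.symm.trans h2.1 : (j:ℕ) = (j':ℕ)))) hjj
    all_goals ring

lemma dmul_sT {N D : ℕ} (lam : Fin D → ℝ) :
    Matrix.diagonal (fun j : Fin D => if (j : ℕ) < N ∧ lam j ≠ 0 then (1:ℝ) else 0)
        * (svdS N D lam)ᵀ = (svdS N D lam)ᵀ := by
  ext j r
  rw [Matrix.diagonal_mul]
  simp only [svdS, Matrix.transpose_apply, Matrix.of_apply]
  by_cases h1 : (r : ℕ) = (j : ℕ)
  · have hN : (j : ℕ) < N := h1 ▸ r.isLt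
    by_cases h2 : lam j = 0 <;> simp [h1, h2, hN]
  · simp [h1]

lemma dot_self_eq {m n : ℕ} (B : Matrix (Fin m) (Fin n) ℝ) (v : Fin n → ℝ) :
    (B *ᵥ v) ⬝ᵥ (B *ᵥ v) = v ⬝ᵥ ((Bᵀ * B) *ᵥ v) := by
  rw [← Matrix.mulVec_mulVec, Matrix.dotProduct_mulVec v Bᵀ, Matrix.vecMul_transpose]

lemma quad_form {D : ℕ} (V : Matrix (Fin D) (Fin D) ℝ) (d : Fin D → ℝ) (v : Fin D → ℝ) :
    v ⬝ᵥ ((V * Matrix.diagonal d * Vᵀ) *ᵥ v)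
      = ∑ j, d j * (v ⬝ᵥ (fun k => V k j)) ^ 2 := by
  have h1 : (V * Matrix.diagonal d * Vᵀ) *ᵥ v
      = V *ᵥ (Matrix.diagonal d *ᵥ (Vᵀ *ᵥ v)) := by
    rw [Matrix.mulVec_mulVec, Matrix.mulVec_mulVec]
  rw [h1, Matrix.dotProduct_mulVec]
  have h2 : v ᵥ* V = Vᵀ *ᵥ v := by
    rw [← Matrix.vecMul_transpose, Matrix.transpose_transpose]
  rw [h2]
  have h3 : ∀ j, (Vᵀ *ᵥ v) j = v ⬝ᵥ (fun k => V k j) := by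
    intro j
    simp [Matrix.mulVec, dotProduct, Matrix.transpose_apply, mul_comm]
  simp only [dotProduct, Matrix.mulVec_diagonal]
  refine Finset.sum_congr rfl fun j _ => ?_
  rw [h3 j]
  simp only [dotProduct]
  ring

lemma finset_sum_dot {ι : Type*} {D : ℕ} (s : Finset ι) (f : ι → Fin D → ℝ) (v : Fin D → ℝ) :
    (∑ k ∈ s, f k) ⬝ᵥ v = ∑ k ∈ s, f k ⬝ᵥ v := by
  simp only [dotProduct, Finset.sum_apply, Finset.sum_mul]
  exact Finset.sum_comm

end AuxLemmas

/-- Theorem 3: the projected regressor built from the optimal set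
`S* = {e_{z,j} : Var_{z,j} >= Bias_{z,j}}` has expected OOD loss no larger than the
projected regressor built from any subset `S` of the right singular vectors of `Z`. -/
theorem optimal_projected_regressor {N M D : ℕ} {Ω : Type*} [MeasurableSpace Ω]
    (μ : Measure Ω) [IsProbabilityMeasure μ] (σ : ℝ≥0)
    (Ux : Matrix (Fin N) (Fin N) ℝ) (Vx : Matrix (Fin D) (Fin D) ℝ) (lamx : Fin D → ℝ)
    (Uz : Matrix (Fin M) (Fin M) ℝ) (Vz : Matrix (Fin D) (Fin D) ℝ) (lamz : Fin D → ℝ)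
    (X : Matrix (Fin N) (Fin D) ℝ) (Z : Matrix (Fin M) (Fin D) ℝ)
    (hlamx : ∀ i, 0 ≤ lamx i) (hlamz : ∀ j, 0 ≤ lamz j)
    (hUx : Uxᵀ * Ux = 1) (hVx : Vxᵀ * Vx = 1) (hVx' : Vx * Vxᵀ = 1)
    (hUz : Uzᵀ * Uz = 1) (hVz : Vzᵀ * Vz = 1) (hVz' : Vz * Vzᵀ = 1)
    (hX : X = Ux * svdS N D lamx * Vxᵀ) (hZ : Z = Uz * svdS M D lamz * Vzᵀ)
    (w : Fin D → ℝ) (hw : w ∈ Submodule.span ℝ (Set.range fun i => X i))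
    (hrows : ∀ m, (fun j => Z m j) ∈ Submodule.span ℝ (Set.range fun i => X i))
    (ε : Ω → Fin N → ℝ)
    (hmeas : ∀ i, Measurable fun ω => ε ω i)
    (hindep : iIndepFun (fun i ω => ε ω i) μ)
    (hgauss : ∀ i, Measure.map (fun ω => ε ω i) μ = gaussianReal 0 (σ ^ 2))
    (Var Bias : Fin D → ℝ)
    (hVar : ∀ j, Var j = (σ : ℝ) ^ 2 * ∑ i, (lamz j ^ 2 / lamx i ^ 2) *
        ((fun k => Vx k i) ⬝ᵥ (fun k => Vz k j)) ^ 2 * (if 0 < lamx i then 1 else 0))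
    (hBias : ∀ j, Bias j = (w ⬝ᵥ (fun k => Vz k j)) ^ 2 * lamz j ^ 2)
    (what : Ω → Fin D → ℝ)
    (hwhat : ∀ ω, what ω = (Vx * svdSdag N D lamx * Uxᵀ).mulVec (X.mulVec w + ε ω))
    (S : Finset (Fin D))
    (wproj wprojstar : Ω → Fin D → ℝ)
    (hwproj : ∀ ω, wproj ω
        = what ω - ∑ j ∈ S, (what ω ⬝ᵥ (fun k => Vz k j)) • (fun k => Vz k j))
    (hwprojstar : ∀ ω, wprojstar ω
        = what ω - ∑ j ∈ Finset.univ.filter (fun j => Bias j ≤ Var j),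
            (what ω ⬝ᵥ (fun k => Vz k j)) • (fun k => Vz k j)) :
    μ[fun ω => (Z.mulVec w - Z.mulVec (wproj ω)) ⬝ᵥ (Z.mulVec w - Z.mulVec (wproj ω))]
      ≥ μ[fun ω =>
          (Z.mulVec w - Z.mulVec (wprojstar ω)) ⬝ᵥ (Z.mulVec w - Z.mulVec (wprojstar ω))] := by
  classical
  -- notation
  set e : Fin D → Fin D → ℝ := fun j k => Vz k j with he
  set A : Matrix (Fin D) (Fin N) ℝ := Vx * svdSdag N D lamx * Uxᵀ with hA
  set c : Fin D → Fin N → ℝ := fun j => Aᵀ *ᵥ (e j) with hc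
  set dz : Fin D → ℝ := fun j => (if (j : ℕ) < M then 1 else 0) * lamz j ^ 2 with hdz
  -- orthonormality of the e j
  have horth : ∀ j j' : Fin D, e j ⬝ᵥ e j' = if j = j' then (1:ℝ) else 0 := by
    intro j j'
    have h := congrFun (congrFun hVz j) j'
    simpa [Matrix.mul_apply, Matrix.one_apply, Matrix.transpose_apply, dotProduct, he]
      using h
  -- cancellation helpers
  have hUxc : ∀ T : Matrix (Fin N) (Fin D) ℝ, Uxᵀ * (Ux * T) = T := by
    intro T; rw [← Matrix.mul_assoc, hUx, Matrix.one_mul]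
  have hVxc : ∀ T : Matrix (Fin D) (Fin N) ℝ, Vxᵀ * (Vx * T) = T := by
    intro T; rw [← Matrix.mul_assoc, hVx, Matrix.one_mul]
  -- A * X is projection
  have hAX : A * X = Vx * Matrix.diagonal
      (fun j : Fin D => if (j : ℕ) < N ∧ lamx j ≠ 0 then (1:ℝ) else 0) * Vxᵀ := by
    rw [hA, hX]
    simp only [Matrix.mul_assoc]
    rw [hUxc (svdS N D lamx * Vxᵀ), ← Matrix.mul_assoc (svdSdag N D lamx), sdag_mul_s]
  -- (A * X) fixes the row span of X
  have hPXt : (A * X) * Xᵀ = Xᵀ := by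
    have hXt : Xᵀ = Vx * ((svdS N D lamx)ᵀ * Uxᵀ) := by
      rw [hX]
      simp only [Matrix.transpose_mul, Matrix.transpose_transpose, Matrix.mul_assoc]
    rw [hAX, hXt]
    simp only [Matrix.mul_assoc]
    rw [hVxc ((svdS N D lamx)ᵀ * Uxᵀ),
      ← Matrix.mul_assoc (Matrix.diagonal fun j : Fin D =>
        if (j : ℕ) < N ∧ lamx j ≠ 0 then (1:ℝ) else 0), dmul_sT]
  have hfix : ∀ v ∈ Submodule.span ℝ (Set.range fun i => X i), (A * X) *ᵥ v = v := by
    intro v hv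
    induction hv using Submodule.span_induction with
    | mem x hx =>
      obtain ⟨r, rfl⟩ := hx
      have h1 : (A * X) *ᵥ (X r) = fun k => ((A * X) * Xᵀ) k r := by
        funext k
        simp [Matrix.mulVec, Matrix.mul_apply, dotProduct, Matrix.transpose_apply]
      rw [h1, hPXt]
      rfl
    | zero => simp
    | add x y _ _ hx hy => rw [Matrix.mulVec_add, hx, hy]
    | smul a x _ hx => rw [Matrix.mulVec_smul, hx]
  -- what in terms of noise
  have hwhat' : ∀ ω, what ω = w + A *ᵥ (ε ω) := by
    intro ω
    rw [hwhat ω, Matrix.mulVec_add, Matrix.mulVec_mulVec, hfix w hw]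
  have hcj : ∀ j, c j = Aᵀ *ᵥ e j := fun j => by simp only [hc]
  -- dot product transfer
  have hdotc : ∀ (u : Fin N → ℝ) j, (A *ᵥ u) ⬝ᵥ e j = u ⬝ᵥ c j := by
    intro u j
    rw [dotProduct_comm, Matrix.dotProduct_mulVec, ← Matrix.mulVec_transpose,
      ← hcj, dotProduct_comm]
  -- the key coordinate computation
  have hkey : ∀ (T : Finset (Fin D)) (wp : Ω → Fin D → ℝ),
      (∀ ω, wp ω = what ω - ∑ j ∈ T, (what ω ⬝ᵥ e j) • e j) →
      ∀ ω j, (w - wp ω) ⬝ᵥ e j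
        = if j ∈ T then w ⬝ᵥ e j else -(ε ω ⬝ᵥ c j) := by
    intro T wp hwp ω j
    have h1 : w - wp ω = (w - what ω) + ∑ k ∈ T, (what ω ⬝ᵥ e k) • e k := by
      rw [hwp ω]; abel
    rw [h1, add_dotProduct, finset_sum_dot]
    have h2 : ∀ k ∈ T, ((what ω ⬝ᵥ e k) • e k) ⬝ᵥ e j
        = if k = j then what ω ⬝ᵥ e j else 0 := by
      intro k _
      rw [smul_dotProduct, horth k j, smul_eq_mul]
      split_ifs with h
      · subst h; ring
      · ring
    rw [Finset.sum_congr rfl h2, Finset.sum_ite_eq' T j (fun _ => what ω ⬝ᵥ e j)]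
    have h3 : (w - what ω) ⬝ᵥ e j = -(ε ω ⬝ᵥ c j) := by
      have : w - what ω = -(A *ᵥ ε ω) := by rw [hwhat' ω]; abel
      rw [this, neg_dotProduct, hdotc]
    by_cases hj : j ∈ T
    · rw [if_pos hj, if_pos hj, sub_dotProduct]
      ring
    · rw [if_neg hj, if_neg hj, add_zero, h3]
  -- quadratic form of Z
  have hZtZ : Zᵀ * Z = Vz * Matrix.diagonal dz * Vzᵀ := by
    rw [hZ]
    simp only [Matrix.transpose_mul, Matrix.transpose_transpose, Matrix.mul_assoc]
    have hUzc : ∀ T : Matrix (Fin M) (Fin D) ℝ, Uzᵀ * (Uz * T) = T := by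
      intro T; rw [← Matrix.mul_assoc, hUz, Matrix.one_mul]
    rw [hUzc (svdS M D lamz * Vzᵀ), ← Matrix.mul_assoc ((svdS M D lamz)ᵀ), svdS_tmul]
  have hZnorm : ∀ v : Fin D → ℝ,
      (Z *ᵥ v) ⬝ᵥ (Z *ᵥ v) = ∑ j, dz j * (v ⬝ᵥ e j) ^ 2 := by
    intro v
    rw [dot_self_eq, hZtZ, quad_form]
  -- norm of c j
  have hAAT : A * Aᵀ = Vx * Matrix.diagonal
      (fun j : Fin D => if (j : ℕ) < N ∧ lamx j ≠ 0 then (lamx j ^ 2)⁻¹ else 0) * Vxᵀ := by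
    rw [hA]
    simp only [Matrix.transpose_mul, Matrix.transpose_transpose, Matrix.mul_assoc]
    rw [hUxc ((svdSdag N D lamx)ᵀ * Vxᵀ), ← Matrix.mul_assoc (svdSdag N D lamx),
      sdag_mul_sdagT]
  have hcc : ∀ j, c j ⬝ᵥ c j
      = ∑ i : Fin D, (if (i : ℕ) < N ∧ lamx i ≠ 0 then (lamx i ^ 2)⁻¹ else 0)
          * (e j ⬝ᵥ (fun k => Vx k i)) ^ 2 := by
    intro j
    rw [hcj j, dot_self_eq, Matrix.transpose_transpose, hAAT, quad_form]
  -- e j in the row span of X when lamz j ≠ 0 and j < M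
  have hspan : ∀ j : Fin D, (j : ℕ) < M → lamz j ≠ 0 →
      e j ∈ Submodule.span ℝ (Set.range fun i => X i) := by
    intro j hjM hlz
    set u : Fin M → ℝ := fun m => Uz m ⟨(j : ℕ), hjM⟩ with hu
    have hZu : Zᵀ *ᵥ u = lamz j • e j := by
      rw [hZ]
      simp only [Matrix.transpose_mul, Matrix.transpose_transpose, Matrix.mul_assoc]
      rw [← Matrix.mulVec_mulVec, ← Matrix.mulVec_mulVec]
      have h1 : Uzᵀ *ᵥ u = Pi.single (⟨(j : ℕ), hjM⟩ : Fin M) 1 := by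
        funext m'
        have h := congrFun (congrFun hUz m') ⟨(j : ℕ), hjM⟩
        simp only [Matrix.mul_apply, Matrix.transpose_apply, Matrix.one_apply] at h
        simp only [Matrix.mulVec, dotProduct, Matrix.transpose_apply, hu]
        rw [h, Pi.single_apply]
      rw [h1]
      have h2 : (svdS M D lamz)ᵀ *ᵥ Pi.single (⟨(j : ℕ), hjM⟩ : Fin M) 1
          = lamz j • (Pi.single j 1 : Fin D → ℝ) := by
        funext k
        rw [Matrix.mulVec_single]
        simp only [Matrix.transpose_apply, svdS, Matrix.of_apply, mul_one,
          Pi.smul_apply, smul_eq_mul]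
        by_cases hk : k = j
        · subst hk; simp
        · simp [hk, Ne.symm hk, Pi.single_apply, Fin.val_inj]
      rw [h2, Matrix.mulVec_smul, Matrix.mulVec_single]
      funext k
      simp [he]
    have hmem : Zᵀ *ᵥ u ∈ Submodule.span ℝ (Set.range fun i => X i) := by
      have hsum : Zᵀ *ᵥ u = ∑ m, u m • (fun k => Z m k) := by
        funext k
        simp only [Matrix.mulVec, dotProduct, Matrix.transpose_apply, Finset.sum_apply,
          Pi.smul_apply, smul_eq_mul]
        exact Finset.sum_congr rfl fun m _ => mul_comm _ _
      rw [hsum]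
      exact Submodule.sum_mem _ fun m _ => Submodule.smul_mem _ _ (hrows m)
    have : e j = (lamz j)⁻¹ • (Zᵀ *ᵥ u) := by
      rw [hZu, smul_smul, inv_mul_cancel₀ hlz, one_smul]
    rw [this]
    exact Submodule.smul_mem _ _ hmem
  -- orthogonality to unused singular directions of X
  have hq0 : ∀ i : Fin D, ¬((i : ℕ) < N ∧ lamx i ≠ 0) →
      ∀ v ∈ Submodule.span ℝ (Set.range fun i => X i), v ⬝ᵥ (fun k => Vx k i) = 0 := by
    intro i hbad v hv
    induction hv using Submodule.span_induction with
    | mem x hx =>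
      obtain ⟨r, rfl⟩ := hx
      have h1 : X r ⬝ᵥ (fun k => Vx k i) = (X * Vx) r i := by
        simp [Matrix.mul_apply, dotProduct]
      rw [h1, hX, Matrix.mul_assoc, Matrix.mul_assoc, hVx, Matrix.mul_one]
      simp only [Matrix.mul_apply, svdS, Matrix.of_apply]
      apply Finset.sum_eq_zero
      intro n _
      rcases not_and_or.mp hbad with h | h
      · rw [if_neg, mul_zero]
        intro hcon
        exact h (hcon ▸ n.isLt)
      · push_neg at h
        rw [h]
        simp
    | zero => simp
    | add x y _ _ hx hy => rw [add_dotProduct, hx, hy, add_zero]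
    | smul a x _ hx => rw [smul_dotProduct, hx, smul_zero]
  -- identification of Var
  have hVarEq : ∀ j : Fin D, (j : ℕ) < M → lamz j ≠ 0 →
      Var j = lamz j ^ 2 * ((σ : ℝ) ^ 2 * (c j ⬝ᵥ c j)) := by
    intro j hjM hlz
    rw [hVar j, hcc j, Finset.mul_sum, Finset.mul_sum, Finset.mul_sum]
    refine Finset.sum_congr rfl fun i _ => ?_
    have hcomm : e j ⬝ᵥ (fun k => Vx k i) = (fun k => Vx k i) ⬝ᵥ e j := dotProduct_comm _ _
    by_cases h0 : lamx i = 0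
    · have : ¬ (0 : ℝ) < lamx i := by rw [h0]; exact lt_irrefl 0
      simp [h0, this]
    · have hpos : 0 < lamx i := lt_of_le_of_ne (hlamx i) (Ne.symm h0)
      by_cases hN : (i : ℕ) < N
      · rw [if_pos hpos, if_pos ⟨hN, h0⟩, hcomm]
        field_simp
        ring
      · have hq := hq0 i (fun hcon => hN hcon.1) (e j) (hspan j hjM hlz)
        have hq' : (fun k => Vx k i) ⬝ᵥ e j = 0 := by rw [← hcomm, hq]
        rw [if_neg (show ¬((i:ℕ) < N ∧ lamx i ≠ 0) from fun hcon => hN hcon.1), hq']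
        ring
  -- expected loss for a projection set
  have hloss : ∀ (T : Finset (Fin D)) (wp : Ω → Fin D → ℝ),
      (∀ ω, wp ω = what ω - ∑ j ∈ T, (what ω ⬝ᵥ e j) • e j) →
      μ[fun ω => (Z *ᵥ w - Z *ᵥ (wp ω)) ⬝ᵥ (Z *ᵥ w - Z *ᵥ (wp ω))]
        = ∑ j, dz j * (if j ∈ T then (w ⬝ᵥ e j) ^ 2 else (σ : ℝ) ^ 2 * (c j ⬝ᵥ c j)) := by
    intro T wp hwp
    have hpt : (fun ω => (Z *ᵥ w - Z *ᵥ (wp ω)) ⬝ᵥ (Z *ᵥ w - Z *ᵥ (wp ω)))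
        = fun ω => ∑ j, dz j * (if j ∈ T then (w ⬝ᵥ e j) ^ 2 else (ε ω ⬝ᵥ c j) ^ 2) := by
      funext ω
      rw [← Matrix.mulVec_sub, hZnorm]
      refine Finset.sum_congr rfl fun j _ => ?_
      rw [hkey T wp hwp ω j]
      split_ifs with h
      · rfl
      · rw [neg_pow]
        ring
    rw [hpt]
    have hintg : ∀ j : Fin D, Integrable
        (fun ω => dz j * (if j ∈ T then (w ⬝ᵥ e j) ^ 2 else (ε ω ⬝ᵥ c j) ^ 2)) μ := by
      intro j
      by_cases hj : j ∈ T
      · simp only [if_pos hj]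
        exact integrable_const _
      · simp only [if_neg hj]
        exact (eps_dot_sq_int hmeas hindep hgauss (c j)).const_mul _
    rw [integral_finset_sum _ fun j _ => hintg j]
    refine Finset.sum_congr rfl fun j _ => ?_
    rw [integral_const_mul]
    congr 1
    by_cases hj : j ∈ T
    · simp only [if_pos hj]
      simp
    · simp only [if_neg hj]
      exact eps_dot_sq_E hmeas hindep hgauss (c j)
  -- put the two losses in closed form
  have hS := hloss S wproj (by intro ω; rw [hwproj ω])
  have hSstar := hloss (Finset.univ.filter (fun j => Bias j ≤ Var j)) wprojstar
    (by intro ω; rw [hwprojstar ω])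
  rw [ge_iff_le, hS, hSstar]
  refine Finset.sum_le_sum fun j _ => ?_
  by_cases hjM : (j : ℕ) < M
  · by_cases hlz : lamz j = 0
    · simp [hdz, hlz]
    · have hdzj : dz j = lamz j ^ 2 := by simp [hdz, hjM]
      have hBj : Bias j = dz j * (w ⬝ᵥ e j) ^ 2 := by
        rw [hBias j, hdzj]; ring
      have hVj : Var j = dz j * ((σ : ℝ) ^ 2 * (c j ⬝ᵥ c j)) := by
        rw [hVarEq j hjM hlz, hdzj]
      by_cases hjS : j ∈ S
      · by_cases hjSs : j ∈ Finset.univ.filter (fun j => Bias j ≤ Var j)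
        · rw [if_pos hjS, if_pos hjSs]
        · rw [if_pos hjS, if_neg hjSs, ← hBj, ← hVj]
          have : ¬ Bias j ≤ Var j := by
            intro hcon
            exact hjSs (Finset.mem_filter.mpr ⟨Finset.mem_univ j, hcon⟩)
          exact le_of_lt (not_le.mp this)
      · by_cases hjSs : j ∈ Finset.univ.filter (fun j => Bias j ≤ Var j)
        · rw [if_neg hjS, if_pos hjSs, ← hBj, ← hVj]
          exact (Finset.mem_filter.mp hjSs).2
        · rw [if_neg hjS, if_neg hjSs]
  · simp [hdz, hjM]
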